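/- arXiv:1806.05070 — 2 statements merged into one kernel-verified Lean document; each statement's English description precedes it below -/
import Mathlib

section
/- Let T be the operator (Tf)(x) := x·f(α(x)) on L^p((0,1), m), where α(x) = {1/x} is the Gauss map and m is the Gauss measure with density 1/((1+x) log 2). Then for every s ∈ ℕ and p > 1 and f ∈ L^p: ∫₀¹ |T^s f(x)|^p dm(x) ≤ g^{(s−1)p} ∫₀¹ |f(x)|^p dm(x), where g = (√5 − 1)/2. -/
/-! The constant `(√5 - 1)/2` is `φ⁻¹`, and `φ⁻² = 1 - φ⁻¹`. Writing `α` for the Gauss map,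
`T^s f(x) = x α(x) ⋯ α^{s-1}(x) f(α^s x)`, and the weight is at most `(φ⁻¹)^{s-1}` on `[0,1)`:
with the potential `min x φ⁻¹` one has `x · min (α x) φ⁻¹ ≤ φ⁻¹ · min x φ⁻¹` (for `x > φ⁻¹`,
`α x = 1/x - 1`, so `x α x = 1 - x < φ⁻²`), so each step of the orbit gains a factor `φ⁻¹`.
The Gauss measure is `α`-invariant: on the branch `x = 1/(y + n + 1)` the change of variables
turns its density into `1/(y+n+1) - 1/(y+n+2)` (over `log 2`), which telescopes to `1/(1+y)`.
Hence `∫ |f ∘ α^s|^p dm = ∫ |f|^p dm`. -/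

open Real MeasureTheory

/-- The transfer-type operator `(Tf)(x) = x · f({1/x})`. -/
noncomputable def gaussOp (f : ℝ → ℝ) : ℝ → ℝ := fun x => x * f (Int.fract (1 / x))

/-- The Gauss measure `dm = dx/((1+x) log 2)` on `(0,1)`. -/
noncomputable def gaussMeasure : Measure ℝ :=
  (volume.restrict (Set.Ioo (0 : ℝ) 1)).withDensity
    (fun x => ENNReal.ofReal (1 / ((1 + x) * Real.log 2)))

open Set Filter
open scoped ENNReal goldenRatio Topology Function

lemma inv_goldenRatio_sq : φ⁻¹ ^ 2 = 1 - φ⁻¹ := by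
  rw [inv_goldenRatio, neg_sq, goldenConj_sq]; ring

lemma inv_goldenRatio_lt_one : φ⁻¹ < 1 := inv_lt_one_of_one_lt₀ one_lt_goldenRatio

lemma half_lt_inv_goldenRatio : 1 / 2 < φ⁻¹ := by
  rw [one_div]; exact inv_strictAnti₀ goldenRatio_pos goldenRatio_lt_two

lemma hasSum_sub_succ_of_antitone {f : ℕ → ℝ} (hf : Antitone f) (h0 : Tendsto f atTop (𝓝 0)) :
    HasSum (fun n => f n - f (n + 1)) (f 0) := by
  rw [hasSum_iff_tendsto_nat_of_nonneg fun n => sub_nonneg.2 (hf n.le_succ)]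
  simp_rw [Finset.sum_range_sub']
  simpa using h0.const_sub (f 0)

noncomputable def gaussMap (x : ℝ) : ℝ := Int.fract (1 / x)

lemma measurable_gaussMap : Measurable gaussMap :=
  measurable_fract.comp (measurable_const.div measurable_id)

lemma gaussMap_mem_Ico (x : ℝ) : gaussMap x ∈ Ico (0 : ℝ) 1 :=
  ⟨Int.fract_nonneg _, Int.fract_lt_one _⟩

lemma iterate_gaussMap_mem_Ico (k : ℕ) {x : ℝ} (hx : x ∈ Ico (0 : ℝ) 1) :
    gaussMap^[k] x ∈ Ico (0 : ℝ) 1 := by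
  cases k with
  | zero => exact hx
  | succ k => rw [Function.iterate_succ_apply']; exact gaussMap_mem_Ico _

noncomputable def gaussBranch (n : ℕ) (y : ℝ) : ℝ := 1 / (y + (n + 1))

lemma gaussMap_gaussBranch (n : ℕ) {y : ℝ} (hy : y ∈ Ico (0 : ℝ) 1) :
    gaussMap (gaussBranch n y) = y := by
  rw [gaussMap, gaussBranch, one_div_one_div, ← Nat.cast_succ, Int.fract_add_natCast,
    Int.fract_eq_self]
  exact hy

lemma gaussBranch_image (n : ℕ) :
    gaussBranch n '' Ico 0 1 = Ioc (1 / ((n : ℝ) + 2)) (1 / ((n : ℝ) + 1)) := by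
  ext x
  simp only [gaussBranch, mem_image, mem_Ico, mem_Ioc]
  constructor
  · rintro ⟨y, ⟨hy0, hy1⟩, rfl⟩
    constructor
    · apply one_div_lt_one_div_of_lt (by positivity); linarith
    · apply one_div_le_one_div_of_le (by positivity); linarith
  · rintro ⟨h1, h2⟩
    have hx : 0 < x := lt_trans (by positivity) h1
    refine ⟨1 / x - (n + 1), ⟨?_, ?_⟩, by rw [sub_add_cancel, one_div_one_div]⟩
    · rw [sub_nonneg, le_div_iff₀ hx, ← le_div_iff₀' (by positivity)]; exact h2
    · have : 1 / x < n + 2 := by rw [div_lt_iff₀ hx, ← div_lt_iff₀' (by positivity)]; exact h1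
      linarith

lemma mul_min_gaussMap_le {x : ℝ} (hx : x ∈ Ico (0 : ℝ) 1) :
    x * min (gaussMap x) φ⁻¹ ≤ φ⁻¹ * min x φ⁻¹ := by
  rcases le_or_gt x φ⁻¹ with hxg | hgx
  · rw [min_eq_left hxg, mul_comm φ⁻¹]
    exact mul_le_mul_of_nonneg_left (min_le_right _ _) hx.1
  · have hx' : x ∈ gaussBranch 0 '' Ico 0 1 := by
      rw [gaussBranch_image]
      constructor <;> norm_num <;> linarith [hx.2, half_lt_inv_goldenRatio]
    obtain ⟨y, hy, rfl⟩ := hx'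
    rw [gaussMap_gaussBranch 0 hy, min_eq_right hgx.le]
    have hy1 : y + 1 ≠ 0 := by linarith [hy.1]
    calc gaussBranch 0 y * min y φ⁻¹ ≤ gaussBranch 0 y * y :=
          mul_le_mul_of_nonneg_left (min_le_left _ _) hx.1
      _ = 1 - gaussBranch 0 y := by
          simp only [gaussBranch, Nat.cast_zero, zero_add]; field_simp; ring
      _ ≤ φ⁻¹ * φ⁻¹ := by rw [← sq, inv_goldenRatio_sq]; linarith

lemma prod_iterate_gaussMap_mul_min_le (s : ℕ) {x : ℝ} (hx : x ∈ Ico (0 : ℝ) 1) :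
    (∏ k ∈ Finset.range s, gaussMap^[k] x) * min (gaussMap^[s] x) φ⁻¹ ≤ φ⁻¹ ^ s * min x φ⁻¹ := by
  induction s generalizing x with
  | zero => simp
  | succ s ih =>
    simp only [Finset.prod_range_succ', Function.iterate_succ_apply, Function.iterate_zero_apply]
    calc (∏ k ∈ Finset.range s, gaussMap^[k] (gaussMap x)) * x * min (gaussMap^[s] (gaussMap x)) φ⁻¹
        = x * ((∏ k ∈ Finset.range s, gaussMap^[k] (gaussMap x)) *
            min (gaussMap^[s] (gaussMap x)) φ⁻¹) := by ring
      _ ≤ x * (φ⁻¹ ^ s * min (gaussMap x) φ⁻¹) :=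
          mul_le_mul_of_nonneg_left (ih (gaussMap_mem_Ico x)) hx.1
      _ = φ⁻¹ ^ s * (x * min (gaussMap x) φ⁻¹) := by ring
      _ ≤ φ⁻¹ ^ s * (φ⁻¹ * min x φ⁻¹) :=
          mul_le_mul_of_nonneg_left (mul_min_gaussMap_le hx) (by positivity)
      _ = φ⁻¹ ^ (s + 1) * min x φ⁻¹ := by ring

lemma prod_iterate_gaussMap_le (s : ℕ) {x : ℝ} (hx : x ∈ Ico (0 : ℝ) 1) :
    ∏ k ∈ Finset.range (s + 1), gaussMap^[k] x ≤ φ⁻¹ ^ s := by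
  have hprod : 0 ≤ ∏ k ∈ Finset.range s, gaussMap^[k] x :=
    Finset.prod_nonneg fun k _ => (iterate_gaussMap_mem_Ico k hx).1
  obtain ⟨ha0, ha1⟩ := iterate_gaussMap_mem_Ico s hx
  have hg : φ⁻¹ * gaussMap^[s] x ≤ min (gaussMap^[s] x) φ⁻¹ :=
    le_min (mul_le_of_le_one_left ha0 inv_goldenRatio_lt_one.le)
      (mul_le_of_le_one_right (by positivity) ha1.le)
  refine le_of_mul_le_mul_left ?_ (inv_pos.2 goldenRatio_pos)
  calc φ⁻¹ * ∏ k ∈ Finset.range (s + 1), gaussMap^[k] x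
      = (∏ k ∈ Finset.range s, gaussMap^[k] x) * (φ⁻¹ * gaussMap^[s] x) := by
        rw [Finset.prod_range_succ]; ring
    _ ≤ (∏ k ∈ Finset.range s, gaussMap^[k] x) * min (gaussMap^[s] x) φ⁻¹ :=
        mul_le_mul_of_nonneg_left hg hprod
    _ ≤ φ⁻¹ ^ s * min x φ⁻¹ := prod_iterate_gaussMap_mul_min_le s hx
    _ ≤ φ⁻¹ ^ s * φ⁻¹ := mul_le_mul_of_nonneg_left (min_le_right _ _) (by positivity)
    _ = φ⁻¹ * φ⁻¹ ^ s := mul_comm _ _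

lemma iterate_gaussOp_apply (s : ℕ) (f : ℝ → ℝ) (x : ℝ) :
    (gaussOp^[s] f) x = (∏ k ∈ Finset.range s, gaussMap^[k] x) * f (gaussMap^[s] x) := by
  induction s generalizing f with
  | zero => simp
  | succ s ih =>
    rw [Function.iterate_succ_apply, ih, Finset.prod_range_succ, Function.iterate_succ_apply']
    simp only [gaussOp, gaussMap]
    ring

lemma Ioc_zero_one_eq_iUnion_gaussBranch_image :
    Ioc (0 : ℝ) 1 = ⋃ n : ℕ, gaussBranch n '' Ico 0 1 := by
  ext x
  simp only [mem_iUnion, gaussBranch_image, mem_Ioc]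
  constructor
  · rintro ⟨hx0, hx1⟩
    have h1x : 1 ≤ 1 / x := by rw [le_div_iff₀ hx0]; linarith
    obtain ⟨n, hn⟩ : ∃ n : ℕ, ⌊1 / x⌋₊ = n + 1 :=
      Nat.exists_eq_add_one.2 (Nat.floor_pos.2 h1x)
    have hle : ((n : ℝ) + 1) ≤ 1 / x := by exact_mod_cast hn ▸ Nat.floor_le (by positivity)
    have hlt : 1 / x < (n : ℝ) + 2 := by
      have := Nat.lt_floor_add_one (1 / x); rw [hn] at this; push_cast at this; linarith
    refine ⟨n, ?_, ?_⟩
    · rw [div_lt_iff₀ (by positivity), ← div_lt_iff₀' hx0]; exact hlt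
    · rw [le_div_iff₀ (by positivity), ← le_div_iff₀' hx0]; exact hle
  · rintro ⟨n, h1, h2⟩
    have hn : (1 : ℝ) ≤ n + 1 := le_add_of_nonneg_left n.cast_nonneg
    exact ⟨lt_trans (by positivity) h1, h2.trans (div_le_one_of_le₀ hn (by positivity))⟩

lemma pairwise_disjoint_gaussBranch_image :
    Pairwise (Disjoint on fun n : ℕ => gaussBranch n '' Ico (0 : ℝ) 1) := by
  intro m n hmn
  refine Set.disjoint_left.2 ?_
  rintro _ ⟨y, hy, rfl⟩ ⟨y', hy', h⟩
  obtain rfl : y' = y := by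
    rw [← gaussMap_gaussBranch n hy', h, gaussMap_gaussBranch m hy]
  have hy0 := hy.1
  have : (n : ℝ) = m := by
    simp only [gaussBranch] at h
    field_simp at h
    linarith
  exact hmn (by exact_mod_cast this.symm)

lemma hasDerivAt_gaussBranch (n : ℕ) {y : ℝ} (hy : y + (n + 1) ≠ 0) :
    HasDerivAt (gaussBranch n) (-1 / (y + (n + 1)) ^ 2) y := by
  unfold gaussBranch
  simpa only [one_div, Pi.inv_def, id] using ((hasDerivAt_id y).add_const ((n : ℝ) + 1)).inv hy

noncomputable def gaussDensity (x : ℝ) : ℝ≥0∞ := ENNReal.ofReal (1 / ((1 + x) * Real.log 2))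

lemma measurable_gaussDensity : Measurable gaussDensity := by
  unfold gaussDensity; fun_prop

lemma setLIntegral_gaussBranch_image (n : ℕ) (G : ℝ → ℝ≥0∞) :
    ∫⁻ x in gaussBranch n '' Ico 0 1, gaussDensity x * G (gaussMap x)
      = ∫⁻ y in Ico 0 1,
          ENNReal.ofReal ((gaussBranch n y - gaussBranch (n + 1) y) / Real.log 2) * G y := by
  rw [lintegral_image_eq_lintegral_abs_deriv_mul measurableSet_Ico
    (fun y hy => (hasDerivAt_gaussBranch n (by linarith [hy.1])).hasDerivWithinAt)
    (fun a ha b hb hab => by rw [← gaussMap_gaussBranch n ha, hab, gaussMap_gaussBranch n hb])]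
  refine setLIntegral_congr_fun measurableSet_Ico fun y hy => ?_
  have hy0 := hy.1
  rw [gaussMap_gaussBranch n hy, gaussDensity, ← mul_assoc, ← ENNReal.ofReal_mul (abs_nonneg _),
    neg_div, abs_neg, abs_of_nonneg (by positivity)]
  congr 2
  have hlog : 0 < Real.log 2 := Real.log_pos one_lt_two
  simp only [gaussBranch]
  push_cast
  field_simp
  ring

lemma tsum_gaussBranch_sub_div_log_two {y : ℝ} (hy : 0 ≤ y) :
    ∑' n : ℕ, ENNReal.ofReal ((gaussBranch n y - gaussBranch (n + 1) y) / Real.log 2)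
      = gaussDensity y := by
  have hanti : Antitone fun n : ℕ => gaussBranch n y := fun m n hmn =>
    one_div_le_one_div_of_le (by positivity) (by gcongr)
  have hlim : Tendsto (fun n : ℕ => gaussBranch n y) atTop (𝓝 0) := by
    simp only [gaussBranch, one_div]
    exact tendsto_inv_atTop_zero.comp <| tendsto_atTop_add_const_left _ _ <|
      tendsto_atTop_add_const_right _ _ tendsto_natCast_atTop_atTop
  have hsum := (hasSum_sub_succ_of_antitone hanti hlim).div_const (Real.log 2)
  rw [← ENNReal.ofReal_tsum_of_nonneg (fun n => div_nonneg (sub_nonneg.2 (hanti n.le_succ))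
    (Real.log_nonneg one_le_two)) hsum.summable, hsum.tsum_eq, gaussDensity, gaussBranch]
  congr 1
  push_cast
  rw [div_div, zero_add, add_comm y]

lemma lintegral_gaussMeasure {s : Set ℝ} (hs : s =ᵐ[volume] Ioo (0 : ℝ) 1) {G : ℝ → ℝ≥0∞}
    (hG : Measurable G) : ∫⁻ x, G x ∂gaussMeasure = ∫⁻ x in s, gaussDensity x * G x := by
  rw [gaussMeasure, ← Measure.restrict_congr_set hs]
  exact lintegral_withDensity_eq_lintegral_mul _ measurable_gaussDensity hG

lemma lintegral_comp_gaussMap {G : ℝ → ℝ≥0∞} (hG : Measurable G) :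
    ∫⁻ x, G (gaussMap x) ∂gaussMeasure = ∫⁻ x, G x ∂gaussMeasure := by
  have hw : ∀ n : ℕ, Measurable fun y =>
      ENNReal.ofReal ((gaussBranch n y - gaussBranch (n + 1) y) / Real.log 2) * G y := fun n => by
    unfold gaussBranch; fun_prop
  calc ∫⁻ x, G (gaussMap x) ∂gaussMeasure
      = ∫⁻ x in ⋃ n : ℕ, gaussBranch n '' Ico 0 1, gaussDensity x * G (gaussMap x) := by
        rw [← Ioc_zero_one_eq_iUnion_gaussBranch_image]
        exact lintegral_gaussMeasure Ioo_ae_eq_Ioc.symm (hG.comp measurable_gaussMap)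
    _ = ∑' n : ℕ, ∫⁻ y in Ico 0 1,
          ENNReal.ofReal ((gaussBranch n y - gaussBranch (n + 1) y) / Real.log 2) * G y := by
        rw [lintegral_iUnion (fun n => gaussBranch_image n ▸ measurableSet_Ioc)
          pairwise_disjoint_gaussBranch_image]
        simp_rw [setLIntegral_gaussBranch_image]
    _ = ∫⁻ y in Ico 0 1, gaussDensity y * G y := by
        rw [← lintegral_tsum fun n => (hw n).aemeasurable]
        refine setLIntegral_congr_fun measurableSet_Ico fun y hy => ?_
        rw [ENNReal.tsum_mul_right, tsum_gaussBranch_sub_div_log_two hy.1]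
    _ = ∫⁻ x, G x ∂gaussMeasure := (lintegral_gaussMeasure Ioo_ae_eq_Ico.symm hG).symm

lemma measurePreserving_gaussMap : MeasurePreserving gaussMap gaussMeasure gaussMeasure := by
  refine ⟨measurable_gaussMap, Measure.ext fun s hs => ?_⟩
  rw [Measure.map_apply measurable_gaussMap hs, ← lintegral_indicator_one hs,
    ← lintegral_indicator_one (measurable_gaussMap hs)]
  exact lintegral_comp_gaussMap (measurable_const.indicator hs)

lemma abs_iterate_gaussOp_le (s : ℕ) (f : ℝ → ℝ) {x : ℝ} (hx : x ∈ Ico (0 : ℝ) 1) :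
    |(gaussOp^[s + 1] f) x| ≤ φ⁻¹ ^ s * |f (gaussMap^[s + 1] x)| := by
  rw [iterate_gaussOp_apply, abs_mul, abs_of_nonneg (Finset.prod_nonneg fun k _ =>
    (iterate_gaussMap_mem_Ico k hx).1)]
  exact mul_le_mul_of_nonneg_right (prod_iterate_gaussMap_le s hx) (abs_nonneg _)

lemma ae_mem_Ico_gaussMeasure : ∀ᵐ x ∂gaussMeasure, x ∈ Ico (0 : ℝ) 1 :=
  (withDensity_absolutelyContinuous _ _).ae_le <|
    (ae_restrict_mem measurableSet_Ioo).mono fun _ hx => Ioo_subset_Ico_self hx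

theorem gaussOp_iterate_contraction_general (s : ℕ) (hs : 1 ≤ s) (p : ℝ) (hp : 1 < p)
    (f : ℝ → ℝ) (hf : Measurable f) :
    ∫⁻ x, ENNReal.ofReal (|(gaussOp^[s] f) x| ^ p) ∂gaussMeasure
      ≤ ENNReal.ofReal (((Real.sqrt 5 - 1) / 2) ^ (((s : ℝ) - 1) * p)) *
        ∫⁻ x, ENNReal.ofReal (|f x| ^ p) ∂gaussMeasure := by
  obtain ⟨k, rfl⟩ := Nat.exists_eq_add_of_le' hs
  have hconst : ((√5 - 1) / 2) ^ ((((k + 1 : ℕ) : ℝ) - 1) * p) = (φ⁻¹ ^ k) ^ p := by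
    rw [show (√5 - 1) / 2 = φ⁻¹ by rw [inv_goldenRatio]; ring, rpow_mul (by positivity)]
    push_cast
    rw [add_sub_cancel_right, rpow_natCast]
  have hG : Measurable fun y => ENNReal.ofReal (|f y| ^ p) := by fun_prop
  rw [hconst]
  calc ∫⁻ x, ENNReal.ofReal (|(gaussOp^[k + 1] f) x| ^ p) ∂gaussMeasure
      ≤ ∫⁻ x, ENNReal.ofReal ((φ⁻¹ ^ k) ^ p) * ENNReal.ofReal (|f (gaussMap^[k + 1] x)| ^ p)
          ∂gaussMeasure := by
        refine lintegral_mono_ae (ae_mem_Ico_gaussMeasure.mono fun x hx => ?_)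
        rw [← ENNReal.ofReal_mul (by positivity), ← mul_rpow (by positivity) (abs_nonneg _)]
        exact ENNReal.ofReal_le_ofReal
          (rpow_le_rpow (abs_nonneg _) (abs_iterate_gaussOp_le k f hx) (by linarith))
    _ = ENNReal.ofReal ((φ⁻¹ ^ k) ^ p) * ∫⁻ x, ENNReal.ofReal (|f x| ^ p) ∂gaussMeasure := by
        rw [lintegral_const_mul' _ _ ENNReal.ofReal_ne_top,
          (measurePreserving_gaussMap.iterate (k + 1)).lintegral_comp hG]

/-- For `s ∈ ℕ`, `p > 1` and `f ∈ L^p`: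
`∫₀¹ |T^s f|^p dm ≤ g^{(s-1)p} ∫₀¹ |f|^p dm` with `g = (√5-1)/2`. -/
theorem gaussOp_iterate_contraction (s : ℕ) (hs : 1 ≤ s) (p : ℝ) (hp : 1 < p)
    (f : ℝ → ℝ) (hf : Measurable f)
    (hfLp : ∫⁻ x, ENNReal.ofReal (|f x| ^ p) ∂gaussMeasure ≠ ⊤) :
    ∫⁻ x, ENNReal.ofReal (|(gaussOp^[s] f) x| ^ p) ∂gaussMeasure
      ≤ ENNReal.ofReal (((Real.sqrt 5 - 1) / 2) ^ (((s : ℝ) - 1) * p)) *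
        ∫⁻ x, ENNReal.ofReal (|f x| ^ p) ∂gaussMeasure :=
  gaussOp_iterate_contraction_general s hs p hp f hf
end

section
/- Vaughan's identity for the Möbius function: let w > 1 and for n ∈ ℕ define c₁(n) = ∑_{αβγ = n, α ≥ w, β ≥ w} μ(γ)c₄(α)c₄(β) with c₄(α) = −∑_{d₁d₂ = α, d₁ ≤ w} μ(d₁); c₂(n) = 2μ(n) if n ≤ w and 0 otherwise; c₃(n) = −∑_{αβγ = n, α ≤ w, β ≤ w} μ(α)μ(β). Then μ(n) = c₁(n) + c₂(n) + c₃(n) for every n ∈ ℕ. -/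
open Finset ArithmeticFunction

/-- `c₄(α) = -∑_{d₁d₂ = α, d₁ ≤ w} μ(d₁)`. -/
noncomputable def cFour (w : ℝ) (a : ℕ) : ℤ :=
  -∑ d ∈ a.divisorsAntidiagonal, if (d.1 : ℝ) ≤ w then moebius d.1 else 0

/-- `c₁(n) = ∑_{αβγ = n, α ≥ w, β ≥ w} μ(γ) c₄(α) c₄(β)`. -/
noncomputable def cOne (w : ℝ) (n : ℕ) : ℤ :=
  ∑ p ∈ n.divisorsAntidiagonal, ∑ q ∈ p.2.divisorsAntidiagonal,
    if w ≤ (p.1 : ℝ) ∧ w ≤ (q.1 : ℝ) then moebius q.2 * cFour w p.1 * cFour w q.1 else 0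

/-- `c₂(n) = 2μ(n)` if `n ≤ w`, else `0`. -/
noncomputable def cTwo (w : ℝ) (n : ℕ) : ℤ :=
  if (n : ℝ) ≤ w then 2 * moebius n else 0

/-- `c₃(n) = -∑_{αβγ = n, α ≤ w, β ≤ w} μ(α)μ(β)`. -/
noncomputable def cThree (w : ℝ) (n : ℕ) : ℤ :=
  -∑ p ∈ n.divisorsAntidiagonal, ∑ q ∈ p.2.divisorsAntidiagonal,
    if (p.1 : ℝ) ≤ w ∧ (q.1 : ℝ) ≤ w then moebius p.1 * moebius q.1 else 0

open scoped ArithmeticFunction.zeta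

/-! Let `μ≤` be `μ` truncated to arguments `≤ w`. In the Dirichlet ring, `μ * ζ = 1` gives
`μ = (1 - μ≤ ζ)² μ + 2 μ≤ - μ≤² ζ` by pure algebra. Evaluated at `n`, the three terms are
`c₁`, `c₂`, `c₃`: the factor `1 - μ≤ ζ` vanishes at `a < w` (there `μ≤ ζ = μ ζ = 1`) and equals
`c₄(a)` at `a ≥ w > 1`. -/

namespace ArithmeticFunction

variable {R : Type*}

noncomputable def truncate [Zero R] (w : ℝ) (f : ArithmeticFunction R) : ArithmeticFunction R :=
  ⟨fun a => if (a : ℝ) ≤ w then f a else 0, by simp⟩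

theorem truncate_apply [Zero R] (w : ℝ) (f : ArithmeticFunction R) (a : ℕ) :
    truncate w f a = if (a : ℝ) ≤ w then f a else 0 :=
  rfl

theorem sub_apply [AddGroup R] (f g : ArithmeticFunction R) (n : ℕ) :
    (f - g) n = f n - g n := by
  rw [sub_eq_add_neg, add_apply, neg_apply, sub_eq_add_neg]

theorem mul_mul_apply [Semiring R] (f g h : ArithmeticFunction R) (n : ℕ) :
    (f * (g * h)) n = ∑ p ∈ n.divisorsAntidiagonal, ∑ q ∈ p.2.divisorsAntidiagonal,
      f p.1 * (g q.1 * h q.2) := by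
  simp only [mul_apply, Finset.mul_sum]

theorem truncate_mul_coe_zeta_apply_of_le [Semiring R] {w : ℝ} (f : ArithmeticFunction R)
    {a : ℕ} (ha : (a : ℝ) ≤ w) : (truncate w f * ζ) a = (f * ζ) a := by
  simp only [coe_mul_zeta_apply]
  refine Finset.sum_congr rfl fun d hd => if_pos ?_
  exact le_trans (by exact_mod_cast Nat.divisor_le hd) ha

end ArithmeticFunction

theorem vaughan_ring_identity {A : Type*} [CommRing A] {m z : A} (h : m * z = 1) (l : A) :
    m = (1 - l * z) * ((1 - l * z) * m) + (l + l) - l * (l * z) := by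
  linear_combination (2 * l - l ^ 2 * z) * h

theorem cFour_eq (w : ℝ) (a : ℕ) : cFour w a = -(truncate w moebius * ζ) a := by
  rw [cFour, coe_mul_zeta_apply,
    Nat.sum_divisorsAntidiagonal fun d _ => if (d : ℝ) ≤ w then moebius d else 0]
  rfl

theorem one_sub_truncate_moebius_mul_zeta_apply {w : ℝ} (hw : 1 < w) (a : ℕ) :
    (1 - truncate w moebius * ζ) a = if w ≤ (a : ℝ) then cFour w a else 0 := by
  rw [ArithmeticFunction.sub_apply]
  split_ifs with h
  · have ha : a ≠ 1 := by rintro rfl; norm_num at h; linarith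
    rw [one_apply_ne ha, cFour_eq, zero_sub]
  · rw [truncate_mul_coe_zeta_apply_of_le _ (not_le.mp h).le, moebius_mul_coe_zeta, sub_self]

theorem cOne_eq {w : ℝ} (hw : 1 < w) (n : ℕ) :
    cOne w n = ((1 - truncate w moebius * ζ) * ((1 - truncate w moebius * ζ) * moebius)) n := by
  rw [cOne, mul_mul_apply]
  refine Finset.sum_congr rfl fun p _ => Finset.sum_congr rfl fun q _ => ?_
  simp only [one_sub_truncate_moebius_mul_zeta_apply hw]
  split_ifs <;> simp_all [mul_comm, mul_left_comm]

theorem cTwo_eq (w : ℝ) (n : ℕ) : cTwo w n = (truncate w moebius + truncate w moebius) n := by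
  rw [cTwo, ArithmeticFunction.add_apply, truncate_apply]
  split_ifs <;> ring

theorem cThree_eq (w : ℝ) (n : ℕ) :
    cThree w n = -(truncate w moebius * (truncate w moebius * ζ)) n := by
  rw [cThree, mul_mul_apply]
  congr 1
  refine Finset.sum_congr rfl fun p _ => Finset.sum_congr rfl fun q hq => ?_
  rw [truncate_apply, truncate_apply, natCoe_apply,
    zeta_apply_ne (Nat.right_ne_zero_of_mem_divisorsAntidiagonal hq)]
  split_ifs <;> simp_all

theorem vaughan_identity_general (w : ℝ) (hw : 1 < w) (n : ℕ) :
    moebius n = cOne w n + cTwo w n + cThree w n := by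
  have h := congrArg (· n) (vaughan_ring_identity moebius_mul_coe_zeta (truncate w moebius))
  simp only [ArithmeticFunction.sub_apply, ArithmeticFunction.add_apply] at h
  rw [cOne_eq hw, cTwo_eq, cThree_eq, ArithmeticFunction.add_apply]
  linear_combination h

/-- Vaughan's identity for the Möbius function:
`μ(n) = c₁(n) + c₂(n) + c₃(n)` for all `n ≥ 1` and `w > 1`. -/
theorem vaughan_identity (w : ℝ) (hw : 1 < w) (n : ℕ) (hn : 1 ≤ n) :
    moebius n = cOne w n + cTwo w n + cThree w n :=
  vaughan_identity_general w hw n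
end
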